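/- arXiv:2504.06216 — 6 statements merged into one kernel-verified Lean document; each statement's English description precedes it below -/
import Mathlib

section
/- Let G be a simple graph in which every chordless cycle has length exactly g (for some fixed g ≥ 4). Then every cycle of G has length ℓ satisfying ℓ ≡ 2 (mod g − 2). -/
/-!
A chord `ab` of a cycle `C` splits it into two shorter cycles, each made of one of the two
`a`–`b` arcs of `C` closed up by the chord, whose lengths add up to `|C| + 2`. The congruence
`ℓ ≡ 2 (mod m)` is preserved by this operation, since `2 + 2 ≡ ℓ + 2` forces `ℓ ≡ 2`; so by
induction on the length it passes from the chordless cycles, whose length `g` is `≡ 2 (mod g - 2)`,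
to all cycles.
-/

/-- A cycle (closed walk) `c` is chordless if every edge of `G` joining two vertices
of `c` is an edge of `c`. -/
def SimpleGraph.IsChordless {V : Type*} (G : SimpleGraph V) {u : V} (c : G.Walk u u) : Prop :=
  ∀ a b : V, G.Adj a b → a ∈ c.support → b ∈ c.support → s(a, b) ∈ c.edges

namespace SimpleGraph.Walk

variable {V : Type*} {G : SimpleGraph V}

lemma IsCycle.exists_isCycle_length_add_length_eq_of_chord [DecidableEq V] {u a b : V}
    {c : G.Walk u u} (hc : c.IsCycle) (hab : G.Adj a b) (ha : a ∈ c.support)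
    (hb : b ∈ c.support) (hchord : s(a, b) ∉ c.edges) :
    ∃ (c₁ : G.Walk b b) (c₂ : G.Walk a a),
      c₁.IsCycle ∧ c₂.IsCycle ∧ c₁.length + c₂.length = c.length + 2 := by
  set c' := c.rotate a ha
  have hc' : c'.IsCycle := hc.rotate ha
  have hb' : b ∈ c'.support := (mem_support_rotate_iff c a ha).mpr hb
  have hchord' : s(a, b) ∉ c'.edges := fun h => hchord ((rotate_edges c a ha).mem_iff.mp h)
  have hspec := c'.take_spec hb'
  set p := c'.takeUntil b hb'
  set q := c'.dropUntil b hb'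
  have hp : p.IsPath := hc'.isPath_takeUntil hb'
  have hq : q.IsPath := by
    rw [← hspec] at hc'
    exact hc'.isPath_of_append_right (not_nil_of_ne hab.ne)
  refine ⟨cons hab.symm p, cons hab q, ?_, ?_, ?_⟩
  · refine (cons_isCycle_iff p hab.symm).mpr ⟨hp, fun h => hchord' ?_⟩
    exact c'.edges_takeUntil_subset_edges hb' (Sym2.eq_swap ▸ h)
  · refine (cons_isCycle_iff q hab).mpr ⟨hq, fun h => hchord' ?_⟩
    exact c'.edges_dropUntil_subset_edges hb' h
  · have hlen : c'.length = c.length := length_rotate c a ha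
    rw [length_cons, length_cons, ← hlen, ← hspec, length_append]
    omega

theorem IsCycle.length_modEq_two_of_forall_isChordless {m : ℕ}
    (h : ∀ (v : V) (c : G.Walk v v), c.IsCycle → G.IsChordless c → c.length ≡ 2 [MOD m])
    {u : V} {c : G.Walk u u} (hc : c.IsCycle) : c.length ≡ 2 [MOD m] := by
  classical
  obtain ⟨n, hn⟩ : ∃ n, c.length = n := ⟨_, rfl⟩
  induction n using Nat.strong_induction_on generalizing u with
  | _ n ih =>
  by_cases hch : G.IsChordless c
  · exact h u c hc hch
  obtain ⟨a, b, hab, ha, hb, hchord⟩ :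
      ∃ a b, G.Adj a b ∧ a ∈ c.support ∧ b ∈ c.support ∧ s(a, b) ∉ c.edges := by
    unfold SimpleGraph.IsChordless at hch
    push Not at hch
    exact hch
  obtain ⟨c₁, c₂, hc₁, hc₂, hlen⟩ :=
    hc.exists_isCycle_length_add_length_eq_of_chord hab ha hb hchord
  have h₁ := ih c₁.length (by have := hc₂.three_le_length; omega) hc₁ rfl
  have h₂ := ih c₂.length (by have := hc₁.three_le_length; omega) hc₂ rfl
  have hsum : c.length + 2 ≡ 2 + 2 [MOD m] := hlen ▸ h₁.add h₂
  exact Nat.ModEq.add_right_cancel' 2 hsum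

end SimpleGraph.Walk

theorem stmt0_general {V : Type*} (G : SimpleGraph V) (g : ℕ)
    (hchordless : ∀ (u : V) (c : G.Walk u u), c.IsCycle → G.IsChordless c → c.length = g)
    (u : V) (c : G.Walk u u) (hc : c.IsCycle) :
    c.length ≡ 2 [MOD g - 2] := by
  refine hc.length_modEq_two_of_forall_isChordless fun v c hc hch => ?_
  have hlen := hchordless v c hc hch
  have h2g : 2 ≤ g := hlen ▸ by have := hc.three_le_length; omega
  exact hlen ▸ ((Nat.modEq_iff_dvd' h2g).mpr dvd_rfl).symm

/-- If every chordless cycle of `G` has length `g ≥ 4`, then every cycle of `G`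
has length `≡ 2 (mod g - 2)`. -/
theorem stmt0 {V : Type*} [Fintype V] (G : SimpleGraph V) (g : ℕ) (hg : 4 ≤ g)
    (hchordless : ∀ (u : V) (c : G.Walk u u), c.IsCycle → G.IsChordless c → c.length = g)
    (u : V) (c : G.Walk u u) (hc : c.IsCycle) :
    c.length ≡ 2 [MOD g - 2] :=
  stmt0_general G g hchordless u c hc
end

section
/- Let G be the 2-clique sum of two graphs H and K along an edge e = {w₁, w₂} (formed from their disjoint union by identifying an edge of H with an edge of K). Then every cycle of G passing through some vertex u ∈ V(H) \ V(K) and some vertex v ∈ V(K) \ V(H) has a chord; in particular, no such cycle is chordless. -/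
/-!
Cut the cycle at `u` and `v` into two `u`–`v` arcs. Since no edge joins `A \ B` to `B \ A`, each
arc meets the separator `A ∩ B = {w₁, w₂}` in an interior vertex, and the two arcs share only `u`
and `v`, so these vertices are `w₁` on one arc and `w₂` on the other. The edge `w₁w₂` then joins
interior vertices of different arcs, hence is not an edge of the cycle: it is a chord.
-/

namespace SimpleGraph

variable {V : Type*} {G : SimpleGraph V}

lemma Walk.exists_mem_support_inter {A B : Set V}
    (hsplit : ∀ a b : V, G.Adj a b → (a ∈ A ∧ b ∈ A) ∨ (a ∈ B ∧ b ∈ B))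
    {a b : V} (p : G.Walk a b) (ha : a ∈ A) (hb : b ∉ A) : ∃ s ∈ p.support, s ∈ A ∩ B := by
  obtain ⟨d, hd, hdA, hdA'⟩ := p.exists_boundary_dart A ha hb
  refine ⟨d.fst, p.dart_fst_mem_support_of_mem_darts hd, hdA, ?_⟩
  rcases hsplit _ _ d.adj with h | h
  · exact absurd h.2 hdA'
  · exact h.1

lemma Walk.IsCycle.eq_or_eq_of_mem_support_append {u v a : V} {p : G.Walk u v}
    {q : G.Walk v u} (hc : (p.append q).IsCycle) (hp : a ∈ p.support) (hq : a ∈ q.support) :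
    a = u ∨ a = v := by
  have hdisj : p.support.tail.Disjoint q.support.tail := by
    have hnodup := hc.support_nodup
    rw [tail_support_append] at hnodup
    exact List.disjoint_of_nodup_append hnodup
  rcases p.mem_support_iff.mp hp with rfl | hp
  · exact .inl rfl
  rcases q.mem_support_iff.mp hq with rfl | hq
  · exact .inr rfl
  exact absurd hq (hdisj hp)

lemma Walk.mk_notMem_edges_append {u v w a b : V} {p : G.Walk u v} {q : G.Walk v w}
    (ha : a ∉ q.support) (hb : b ∉ p.support) : s(a, b) ∉ (p.append q).edges := by
  rw [edges_append, List.mem_append, not_or]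
  exact ⟨fun h => hb (p.snd_mem_support_of_mem_edges h),
    fun h => ha (q.fst_mem_support_of_mem_edges h)⟩

lemma IsChordless.rotate [DecidableEq V] {x u : V} {c : G.Walk x x} (hc : G.IsChordless c)
    (hu : u ∈ c.support) : G.IsChordless (c.rotate u hu) := fun a b hab ha hb =>
  (c.rotate_edges u hu).perm.mem_iff.mpr (hc a b hab (by simpa using ha) (by simpa using hb))

end SimpleGraph

theorem stmt2_general {V : Type*} (G : SimpleGraph V) (A B : Set V) (w₁ w₂ : V)
    (hinter : A ∩ B = {w₁, w₂}) (hw : G.Adj w₁ w₂)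
    (hsplit : ∀ a b : V, G.Adj a b → (a ∈ A ∧ b ∈ A) ∨ (a ∈ B ∧ b ∈ B))
    (u v : V) (hu : u ∈ A \ B) (hv : v ∈ B \ A)
    (x : V) (c : G.Walk x x) (hc : c.IsCycle)
    (huc : u ∈ c.support) (hvc : v ∈ c.support) :
    ¬ G.IsChordless c := by
  classical
  intro hchord
  have hvc' : v ∈ (c.rotate u huc).support := (c.mem_support_rotate_iff u huc).mpr hvc
  obtain ⟨p, q, hpq⟩ : ∃ (p : G.Walk u v) (q : G.Walk v u), p.append q = c.rotate u huc :=
    ⟨_, _, (c.rotate u huc).take_spec hvc'⟩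
  have hcyc : (p.append q).IsCycle := hpq ▸ hc.rotate huc
  have hchord' : G.IsChordless (p.append q) := hpq ▸ hchord.rotate huc
  obtain ⟨s₁, hs₁p, hs₁⟩ := p.exists_mem_support_inter hsplit hu.1 hv.2
  obtain ⟨s₂, hs₂q, hs₂⟩ := q.exists_mem_support_inter (fun a b h => (hsplit a b h).symm) hv.1 hu.2
  have hs₁q : s₁ ∉ q.support := fun h => by
    rcases hcyc.eq_or_eq_of_mem_support_append hs₁p h with rfl | rfl
    exacts [hu.2 hs₁.2, hv.2 hs₁.1]
  have hs₂p : s₂ ∉ p.support := fun h => by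
    rcases hcyc.eq_or_eq_of_mem_support_append h hs₂q with rfl | rfl
    exacts [hu.2 hs₂.1, hv.2 hs₂.2]
  have hadj : G.Adj s₁ s₂ := by
    rw [hinter] at hs₁
    rw [Set.inter_comm, hinter] at hs₂
    rcases hs₁ with rfl | rfl <;> rcases hs₂ with rfl | rfl
    exacts [absurd hs₂q hs₁q, hw, hw.symm, absurd hs₂q hs₁q]
  exact SimpleGraph.Walk.mk_notMem_edges_append hs₁q hs₂p <| hchord' _ _ hadj
    (p.mem_support_append_iff q |>.mpr (.inl hs₁p)) (p.mem_support_append_iff q |>.mpr (.inr hs₂q))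

/-- If `G` is the 2-clique sum of two graphs with vertex sets `A` and `B`, glued along the
shared edge `{w₁, w₂}`, then every cycle passing through a vertex `u ∈ A \ B` and a
vertex `v ∈ B \ A` has a chord; i.e., it is not chordless. -/
theorem stmt2 {V : Type*} (G : SimpleGraph V) (A B : Set V) (w₁ w₂ : V) (hne : w₁ ≠ w₂)
    (hcover : A ∪ B = Set.univ) (hinter : A ∩ B = {w₁, w₂}) (hw : G.Adj w₁ w₂)
    (hsplit : ∀ a b : V, G.Adj a b → (a ∈ A ∧ b ∈ A) ∨ (a ∈ B ∧ b ∈ B))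
    (u v : V) (hu : u ∈ A \ B) (hv : v ∈ B \ A)
    (x : V) (c : G.Walk x x) (hc : c.IsCycle)
    (huc : u ∈ c.support) (hvc : v ∈ c.support) :
    ¬ G.IsChordless c :=
  stmt2_general G A B w₁ w₂ hinter hw hsplit u v hu hv x c hc huc hvc
end

section
/- Let A = {10, 15, 42} and let I_A ⊆ K[x₁, x₂, x₃] be the kernel of the map x₁ ↦ t¹⁰, x₂ ↦ t¹⁵, x₃ ↦ t⁴². Then I_A = ⟨x₁³ − x₂², x₃⁵ − x₁¹⁸x₂²⟩. -/
/-!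
Modulo `x₁³ = x₂²` and `x₃⁵ = x₁¹⁸x₂² = x₁²¹` every monomial reduces to some `x₁ᵃx₂ᵇx₃ᶜ` with
`b < 2` and `c < 5`. Such a monomial maps to `t^(10a + 15b + 42c)`, and this exponent determines
`b` (by parity) and `c` (modulo 5, as `42 ≡ 2`), hence also `a`. So distinct reduced monomials have
distinct images, a polynomial in the kernel reduces to `0`, and the kernel is generated by the two
binomials.
-/

open MvPolynomial Finsupp

section MonomialMap

variable {R σ : Type*} [CommRing R] (w : σ → ℕ)

theorem aeval_X_pow_monomial (m : σ →₀ ℕ) (r : R) :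
    aeval (fun i => (Polynomial.X : Polynomial R) ^ w i) (monomial m r) =
      Polynomial.C r * Polynomial.X ^ weight w m := by
  simp only [aeval_monomial, weight_apply, Finsupp.prod, Finsupp.sum, ← pow_mul,
    Finset.prod_pow_eq_pow_sum, smul_eq_mul, mul_comm (w _), Polynomial.algebraMap_eq]

theorem coeff_aeval_X_pow_weight {p : MvPolynomial σ R}
    (hinj : Set.InjOn (weight w) (p.support : Set (σ →₀ ℕ))) {m : σ →₀ ℕ}
    (hm : m ∈ p.support) :
    (aeval (fun i => (Polynomial.X : Polynomial R) ^ w i) p).coeff (weight w m) = coeff m p := by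
  conv_lhs => rw [p.as_sum]
  rw [map_sum, Polynomial.finsetSum_coeff, Finset.sum_eq_single m]
  · simp [aeval_X_pow_monomial]
  · intro n hn hnm
    have : weight w n ≠ weight w m := fun h => hnm (hinj hn hm h)
    simp [aeval_X_pow_monomial, Polynomial.coeff_X_pow, this.symm]
  · exact fun h => absurd hm h

theorem eq_zero_of_aeval_X_pow_eq_zero {p : MvPolynomial σ R}
    (hinj : Set.InjOn (weight w) (p.support : Set (σ →₀ ℕ)))
    (hp : aeval (fun i => (Polynomial.X : Polynomial R) ^ w i) p = 0) : p = 0 := by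
  by_contra hne
  obtain ⟨m, hm⟩ := support_nonempty.2 hne
  have := coeff_aeval_X_pow_weight w hinj hm
  rw [hp, Polynomial.coeff_zero] at this
  exact MvPolynomial.mem_support_iff.1 hm this.symm

theorem ker_aeval_X_pow_eq {I : Ideal (MvPolynomial σ R)} (nf : (σ →₀ ℕ) → σ →₀ ℕ)
    (hI : I ≤ RingHom.ker (aeval (fun i => (Polynomial.X : Polynomial R) ^ w i)))
    (hnf : ∀ m, monomial m (1 : R) - monomial (nf m) 1 ∈ I)
    (hinj : Set.InjOn (weight w) (Set.range nf)) :
    RingHom.ker (aeval (fun i => (Polynomial.X : Polynomial R) ^ w i)) = I := by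
  refine le_antisymm (fun p hp => ?_) hI
  classical
  set q := ∑ m ∈ p.support, monomial (nf m) (coeff m p)
  have hpq : p - q ∈ I := by
    rw [show p - q = ∑ m ∈ p.support, (monomial m (coeff m p) - monomial (nf m) (coeff m p)) by
      rw [Finset.sum_sub_distrib, ← p.as_sum]]
    refine Ideal.sum_mem _ fun m _ => ?_
    have := I.mul_mem_left (C (coeff m p)) (hnf m)
    rwa [mul_sub, C_mul_monomial, C_mul_monomial, mul_one] at this
  have hq : q = 0 := by
    refine eq_zero_of_aeval_X_pow_eq_zero w (hinj.mono fun n hn => ?_) ?_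
    · obtain ⟨m, -, hm⟩ := Finset.mem_biUnion.1 (support_sum hn)
      exact ⟨m, (Finset.mem_singleton.1 (support_monomial_subset hm)).symm⟩
    · have := sub_mem hp (hI hpq)
      rwa [sub_sub_cancel, RingHom.mem_ker] at this
  simpa [hq] using hpq

end MonomialMap

namespace Toric10_15_42

theorem pow_mul_pow_mul_pow_eq_reduced {M : Type*} [CommMonoid M] {x y z : M}
    (hy : y ^ 2 = x ^ 3) (hz : z ^ 5 = x ^ 21) (a b c : ℕ) :
    x ^ a * y ^ b * z ^ c = x ^ (a + 3 * (b / 2) + 21 * (c / 5)) * y ^ (b % 2) * z ^ (c % 5) := by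
  conv_lhs => rw [← Nat.div_add_mod b 2, ← Nat.div_add_mod c 5]
  simp only [pow_add, pow_mul, hy, hz]
  ac_rfl

variable {R : Type*} [CommRing R]

noncomputable def reduce (m : Fin 3 →₀ ℕ) : Fin 3 →₀ ℕ :=
  equivFunOnFinite.symm ![m 0 + 3 * (m 1 / 2) + 21 * (m 2 / 5), m 1 % 2, m 2 % 5]

theorem weight_apply_fin_three (m : Fin 3 →₀ ℕ) :
    weight ![10, 15, 42] m = 10 * m 0 + 15 * m 1 + 42 * m 2 := by
  simp [weight_eq_sum, Fin.sum_univ_three, mul_comm]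

theorem injOn_weight_range_reduce : Set.InjOn (weight ![10, 15, 42]) (Set.range reduce) := by
  rintro _ ⟨m, rfl⟩ _ ⟨n, rfl⟩ h
  simp only [weight_apply_fin_three] at h
  ext i
  fin_cases i <;> simp [reduce] at h ⊢ <;> omega

theorem monomial_one_eq (m : Fin 3 →₀ ℕ) :
    (monomial m 1 : MvPolynomial (Fin 3) R) = X 0 ^ m 0 * X 1 ^ m 1 * X 2 ^ m 2 := by
  rw [monomial_eq, C_1, one_mul, Finsupp.prod_fintype _ _ fun _ => pow_zero _, Fin.prod_univ_three]

theorem monomial_sub_monomial_reduce_mem (m : Fin 3 →₀ ℕ) :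
    (monomial m 1 - monomial (reduce m) 1 : MvPolynomial (Fin 3) R) ∈
      Ideal.span {X 0 ^ 3 - X 1 ^ 2, X 2 ^ 5 - X 0 ^ 18 * X 1 ^ 2} := by
  let J : Ideal (MvPolynomial (Fin 3) R) :=
    Ideal.span {X 0 ^ 3 - X 1 ^ 2, X 2 ^ 5 - X 0 ^ 18 * X 1 ^ 2}
  have hx : Ideal.Quotient.mk J (X 0) ^ 3 = Ideal.Quotient.mk J (X 1) ^ 2 := by
    rw [← map_pow, ← map_pow, Ideal.Quotient.eq]
    exact Ideal.subset_span (by simp)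
  have hz : Ideal.Quotient.mk J (X 2) ^ 5 = Ideal.Quotient.mk J (X 0) ^ 21 := by
    have : Ideal.Quotient.mk J (X 2) ^ 5 =
        Ideal.Quotient.mk J (X 0) ^ 18 * Ideal.Quotient.mk J (X 1) ^ 2 := by
      rw [← map_pow, ← map_pow, ← map_pow, ← map_mul, Ideal.Quotient.eq]
      exact Ideal.subset_span (by simp)
    rw [this, ← hx, ← pow_add]
  rw [← Ideal.Quotient.eq, monomial_one_eq, monomial_one_eq]
  simp only [map_mul, map_pow]
  rw [pow_mul_pow_mul_pow_eq_reduced hx.symm hz]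
  simp [reduce, J]

theorem span_le_ker :
    (Ideal.span {X 0 ^ 3 - X 1 ^ 2, X 2 ^ 5 - X 0 ^ 18 * X 1 ^ 2} :
        Ideal (MvPolynomial (Fin 3) R)) ≤
      RingHom.ker (aeval (fun i => (Polynomial.X : Polynomial R) ^ (![10, 15, 42] i))) := by
  rw [Ideal.span_le]
  rintro _ (rfl | rfl) <;> simp [← pow_mul, ← pow_add]

end Toric10_15_42

open Toric10_15_42 in
open MvPolynomial in
/-- The toric ideal of `A = {10, 15, 42}` — the kernel of the `K`-algebra map
`x₁ ↦ t¹⁰, x₂ ↦ t¹⁵, x₃ ↦ t⁴²` — is generated by `x₁³ − x₂²` and `x₃⁵ − x₁¹⁸x₂²`. -/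
theorem stmt8 (K : Type*) [Field K] :
    ∀ φ : MvPolynomial (Fin 3) K →ₐ[K] Polynomial K,
      φ = aeval (fun i => Polynomial.X ^ (![10, 15, 42] i)) →
      RingHom.ker φ = Ideal.span {X 0 ^ 3 - X 1 ^ 2, X 2 ^ 5 - X 0 ^ 18 * X 1 ^ 2} := by
  rintro φ rfl
  exact ker_aeval_X_pow_eq _ reduce span_le_ker monomial_sub_monomial_reduce_mem
    injOn_weight_range_reduce
end

section
/- Let I be an ideal of a polynomial ring R = K[x₁,…,x_m] over a field K, let ≽ be a monomial order, and let f, g be distinct elements of the reduced Gröbner basis of I with respect to ≽, with f = x^λ − x^μ, g = x^α − x^μ binomials sharing the trailing term x^μ. Then gcd(x^λ, x^α) = 1. -/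
/-!
If `x^λ` and `x^α` share a variable `x_i`, then `f - g = x^λ - x^α = x_i h` with
`h = x^(λ - e_i) - x^(α - e_i)`. Primality of `I` and `x_i ∉ I` give `h ∈ I`, and `h ≠ 0` since
`f ≠ g`. The leading exponent of `h` is `λ - e_i` or `α - e_i`, so the Gröbner basis property
yields an element of `G` whose leading term properly divides `x^λ` or `x^α`, which reducedness
forbids.
-/

open MvPolynomial

variable {σ : Type*} {K : Type*} [Field K]

/-- `d` is the exponent of the leading term of `f` with respect to the monomial order `m`. -/
def IsLeadExp (m : MonomialOrder σ) (f : MvPolynomial σ K) (d : σ →₀ ℕ) : Prop :=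
  d ∈ f.support ∧ ∀ e ∈ f.support, m.toSyn e ≤ m.toSyn d

/-- `G` is a Gröbner basis of `I` w.r.t. `m`: it is contained in `I` and the leading term of
every nonzero element of `I` is divisible by the leading term of some element of `G`. -/
def IsGroebnerBasis (m : MonomialOrder σ) (I : Ideal (MvPolynomial σ K))
    (G : Set (MvPolynomial σ K)) : Prop :=
  G ⊆ (I : Set (MvPolynomial σ K)) ∧
    ∀ f ∈ I, f ≠ 0 → ∃ g ∈ G, ∃ d e : σ →₀ ℕ, IsLeadExp m g d ∧ IsLeadExp m f e ∧ d ≤ e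

/-- `G` is the reduced Gröbner basis of `I` w.r.t. `m`: a Gröbner basis consisting of monic
polynomials, such that no monomial appearing in an element of `G` is divisible by the leading
term of another element of `G`. -/
def IsReducedGroebnerBasis (m : MonomialOrder σ) (I : Ideal (MvPolynomial σ K))
    (G : Set (MvPolynomial σ K)) : Prop :=
  IsGroebnerBasis m I G ∧
    (∀ g ∈ G, ∀ d : σ →₀ ℕ, IsLeadExp m g d → coeff d g = 1) ∧
    (∀ g ∈ G, ∀ g' ∈ G, g ≠ g' → ∀ d : σ →₀ ℕ, IsLeadExp m g' d → ∀ e ∈ g.support, ¬ d ≤ e)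

section Binomial

variable {R : Type*} [CommRing R]

theorem eq_or_eq_of_mem_support_monomial_sub_monomial {a b e : σ →₀ ℕ} {r s : R}
    (he : e ∈ (monomial a r - monomial b s).support) : e = a ∨ e = b := by
  classical
  rcases Finset.mem_union.mp (support_sub σ _ _ he) with h | h
  · exact Or.inl (Finset.mem_singleton.mp (support_monomial_subset h))
  · exact Or.inr (Finset.mem_singleton.mp (support_monomial_subset h))

theorem X_mul_monomial_tsub_single {i : σ} {a : σ →₀ ℕ} (hi : 0 < a i) (r : R) :
    X i * monomial (a - Finsupp.single i 1) r = monomial a r := by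
  rw [X, monomial_mul, one_mul, add_tsub_cancel_of_le (Finsupp.single_le_iff.mpr hi)]

end Binomial

variable {m : MonomialOrder σ}

theorem IsLeadExp.unique {f : MvPolynomial σ K} {d d' : σ →₀ ℕ}
    (h : IsLeadExp m f d) (h' : IsLeadExp m f d') : d = d' :=
  m.toSyn.injective (le_antisymm (h'.2 d h.1) (h.2 d' h'.1))

namespace IsReducedGroebnerBasis

variable {I : Ideal (MvPolynomial σ K)} {G : Set (MvPolynomial σ K)}

theorem eq_of_leadExp_le (hG : IsReducedGroebnerBasis m I G) {f u : MvPolynomial σ K}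
    (hf : f ∈ G) (hu : u ∈ G) {lam d : σ →₀ ℕ} (hflead : IsLeadExp m f lam)
    (hud : IsLeadExp m u d) (hdl : d ≤ lam) : d = lam := by
  by_cases huf : u = f
  · subst huf
    exact hud.unique hflead
  · exact absurd hdl (hG.2.2 f hf u hu (Ne.symm huf) d hud lam hflead.1)

theorem leadExp_not_le_tsub_single (hG : IsReducedGroebnerBasis m I G)
    {f u : MvPolynomial σ K} (hf : f ∈ G) (hu : u ∈ G) {lam d : σ →₀ ℕ}
    (hflead : IsLeadExp m f lam) (hud : IsLeadExp m u d) {i : σ} (hi : 0 < lam i) :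
    ¬ d ≤ lam - Finsupp.single i 1 := by
  intro hd
  have hdl : d = lam := hG.eq_of_leadExp_le hf hu hflead hud (hd.trans tsub_le_self)
  have hdi := hd i
  simp only [hdl, Finsupp.tsub_apply, Finsupp.single_eq_same] at hdi
  omega

end IsReducedGroebnerBasis

/-- If `f = x^λ − x^μ` and `g = x^α − x^μ` are distinct elements of the reduced Gröbner basis
of a prime binomial ideal `I` containing no variable, with leading terms `x^λ` and `x^α` and
the same trailing term `x^μ`, then `gcd(x^λ, x^α) = 1`. -/
theorem stmt11 (m : MonomialOrder σ) (I : Ideal (MvPolynomial σ K))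
    (hprime : I.IsPrime) (hvar : ∀ i : σ, X i ∉ I)
    (G : Set (MvPolynomial σ K)) (hG : IsReducedGroebnerBasis m I G)
    (f g : MvPolynomial σ K) (hf : f ∈ G) (hg : g ∈ G) (hfg : f ≠ g)
    (lam mu alf : σ →₀ ℕ)
    (hfeq : f = monomial lam 1 - monomial mu 1)
    (hgeq : g = monomial alf 1 - monomial mu 1)
    (hflead : IsLeadExp m f lam) (hglead : IsLeadExp m g alf) :
    ∀ i : σ, min (lam i) (alf i) = 0 := by
  intro i
  by_contra hmin
  have hlam : 0 < lam i := by omega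
  have half : 0 < alf i := by omega
  set h : MvPolynomial σ K :=
    monomial (lam - Finsupp.single i 1) 1 - monomial (alf - Finsupp.single i 1) 1
  have hXh : X i * h = f - g := by
    rw [mul_sub, X_mul_monomial_tsub_single hlam, X_mul_monomial_tsub_single half, hfeq, hgeq,
      sub_sub_sub_cancel_right]
  have hhI : h ∈ I :=
    (hprime.mem_or_mem (hXh ▸ I.sub_mem (hG.1.1 hf) (hG.1.1 hg))).resolve_left (hvar i)
  have hh0 : h ≠ 0 := fun h0 => hfg (sub_eq_zero.mp (by rw [← hXh, h0, mul_zero]))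
  obtain ⟨u, hu, d, e, hud, he, hde⟩ := hG.1.2 h hhI hh0
  rcases eq_or_eq_of_mem_support_monomial_sub_monomial he.1 with rfl | rfl
  · exact hG.leadExp_not_le_tsub_single hf hu hflead hud hlam hde
  · exact hG.leadExp_not_le_tsub_single hg hu hglead hud half hde
end

section
/- Let k ≥ 3 and let G be a graph that is an iterated 2-clique sum of theta graphs Θ_{r_i}^k (r_i ≥ 2). Then every chordless cycle of G has length 2k. -/
/-- The theta graph `Θ_r^k` : two base points joined by `r` internally vertex-disjoint
paths of length `k`. -/
def thetaGraph (r k : ℕ) : SimpleGraph (Fin 2 ⊕ Fin r × Fin (k - 1)) :=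
  SimpleGraph.fromRel (fun x y =>
    match x, y with
    | Sum.inl a, Sum.inr (_, j) => (a = 0 ∧ (j : ℕ) = 0) ∨ (a = 1 ∧ (j : ℕ) + 2 = k)
    | Sum.inr (i, j), Sum.inr (i', j') => i = i' ∧ (j : ℕ) + 1 = (j' : ℕ)
    | _, _ => False)

/-- `IsThetaSum k V G` : the graph `G` is an iterated 2-clique sum of theta graphs
`Θ_r^k` with `r ≥ 2`. -/
inductive IsThetaSum (k : ℕ) : (V : Type) → SimpleGraph V → Prop
  | base (V : Type) (G : SimpleGraph V) (r : ℕ) (hr : 2 ≤ r)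
      (iso : G ≃g thetaGraph r k) : IsThetaSum k V G
  | sum (V : Type) (G : SimpleGraph V) (A B : Set V) (w₁ w₂ : V) (hne : w₁ ≠ w₂)
      (hcover : A ∪ B = Set.univ) (hinter : A ∩ B = {w₁, w₂}) (hw : G.Adj w₁ w₂)
      (hsplit : ∀ a b : V, G.Adj a b → (a ∈ A ∧ b ∈ A) ∨ (a ∈ B ∧ b ∈ B))
      (hA : IsThetaSum k A (G.induce A)) (r : ℕ) (hr : 2 ≤ r)
      (hB : (G.induce B) ≃g thetaGraph r k) : IsThetaSum k V G

namespace SimpleGraph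

variable {V W : Type*} {G : SimpleGraph V} {H : SimpleGraph W}

lemma IsChordless.of_map (f : H ↪g G) {x : W} {c : H.Walk x x}
    (hcl : G.IsChordless (c.map f.toHom)) : H.IsChordless c := by
  intro a b hab ha hb
  have hmap := hcl (f a) (f b) (f.map_adj_iff.2 hab)
    (by rw [Walk.support_map]; exact List.mem_map_of_mem ha)
    (by rw [Walk.support_map]; exact List.mem_map_of_mem hb)
  rw [Walk.edges_map] at hmap
  obtain ⟨e, he, hfe⟩ := List.mem_map.1 hmap
  rwa [← Sym2.map.injective f.injective (hfe.trans (Sym2.map_mk f a b).symm)]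

namespace Walk

variable {x : V} {c : G.Walk x x}

@[simp]
lemma length_induce {s : Set V} {u v : V} (p : G.Walk u v) (hp : ∀ w ∈ p.support, w ∈ s) :
    (p.induce s hp).length = p.length := by
  have h := congrArg length (p.map_induce hp)
  rwa [length_map] at h

lemma IsCycle.induce {s : Set V} (hc : c.IsCycle) (hs : ∀ w ∈ c.support, w ∈ s) :
    (c.induce s hs).IsCycle :=
  (isCycle_map_iff_of_injective (Embedding.induce (G := G) s).injective).1 (by rwa [map_induce])

lemma IsCycle.exists_mem_edges_iff (hc : c.IsCycle) {v : V} (hv : v ∈ c.support) :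
    ∃ t₁ t₂, t₁ ≠ t₂ ∧ ∀ t, s(v, t) ∈ c.edges ↔ t = t₁ ∨ t = t₂ := by
  obtain ⟨t₁, t₂, hne, h⟩ := Set.ncard_eq_two.1 (hc.ncard_neighborSet_toSubgraph_eq_two hv)
  refine ⟨t₁, t₂, hne, fun t => ?_⟩
  rw [← adj_toSubgraph_iff_mem_edges, ← Subgraph.mem_neighborSet, h]
  rfl

lemma IsCycle.mem_edges_of_forall_adj (hc : c.IsCycle) {v a b : V} (hv : v ∈ c.support)
    (hN : ∀ t, G.Adj v t → t = a ∨ t = b) : s(v, a) ∈ c.edges ∧ s(v, b) ∈ c.edges := by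
  obtain ⟨t₁, t₂, hne, ht⟩ := hc.exists_mem_edges_iff hv
  have h₁ := hN t₁ (c.adj_of_mem_edges ((ht t₁).2 (.inl rfl)))
  have h₂ := hN t₂ (c.adj_of_mem_edges ((ht t₂).2 (.inr rfl)))
  simp only [ht]
  rcases h₁ with rfl | rfl <;> rcases h₂ with rfl | rfl <;> simp_all

lemma IsCycle.card_support_toFinset [DecidableEq V] (hc : c.IsCycle) :
    c.support.toFinset.card = c.length := by
  rw [← cons_tail_support, List.toFinset_cons,
    Finset.insert_eq_of_mem (List.mem_toFinset.2 (end_mem_tail_support hc.not_nil)),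
    List.toFinset_card_of_nodup hc.support_nodup, List.length_tail, length_support]
  rfl

lemma exists_mem_tail_support_inter {A B : Set V}
    (hsplit : ∀ a b, G.Adj a b → (a ∈ A ∧ b ∈ A) ∨ (a ∈ B ∧ b ∈ B)) :
    ∀ {u v : V} (p : G.Walk u v), u ∈ A → u ∉ B → v ∉ A → ∃ w ∈ p.support.tail, w ∈ A ∩ B
  | _, _, nil, huA, _, hvA => absurd huA hvA
  | _, _, cons (v := y) h p, huA, huB, hvA => by
    have hyA : y ∈ A := ((hsplit _ _ h).resolve_right fun h => huB h.1).2
    by_cases hyB : y ∈ B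
    · exact ⟨y, by simp, hyA, hyB⟩
    · obtain ⟨w, hw, hwAB⟩ := exists_mem_tail_support_inter hsplit p hyA hyB hvA
      exact ⟨w, by simpa using p.support.mem_of_mem_tail hw, hwAB⟩

lemma IsCycle.support_subset_or_of_isChordless {A B : Set V} {w₁ w₂ : V}
    (hcover : A ∪ B = Set.univ) (hinter : A ∩ B = {w₁, w₂}) (hw : G.Adj w₁ w₂)
    (hsplit : ∀ a b, G.Adj a b → (a ∈ A ∧ b ∈ A) ∨ (a ∈ B ∧ b ∈ B))
    (hc : c.IsCycle) (hcl : G.IsChordless c) :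
    (∀ v ∈ c.support, v ∈ A) ∨ (∀ v ∈ c.support, v ∈ B) := by
  classical
  by_contra! ⟨⟨a, ha, haA⟩, b, hb, hbB⟩
  have haB : a ∈ B := (hcover ▸ Set.mem_univ a : a ∈ A ∪ B).resolve_left haA
  have hbA : b ∈ A := (hcover ▸ Set.mem_univ b : b ∈ A ∪ B).resolve_right hbB
  set d := c.rotate b hb
  have had : a ∈ d.support := (mem_support_rotate_iff ..).2 ha
  set p := d.takeUntil a had
  set q := d.dropUntil a had
  have hdisj : p.support.tail.Disjoint q.support.tail := by
    have : d.support.tail.Nodup := (hc.rotate hb).support_nodup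
    rw [← take_spec d had, tail_support_append] at this
    exact List.disjoint_of_nodup_append this
  obtain ⟨w, hwp, hwA, hwB⟩ := exists_mem_tail_support_inter hsplit p hbA hbB haA
  obtain ⟨w', hwq, hw'B, hw'A⟩ :=
    exists_mem_tail_support_inter (fun a b h => (hsplit a b h).symm) q haB haA hbB
  have hadj : G.Adj w w' := by
    have h₁ : w ∈ A ∩ B := ⟨hwA, hwB⟩
    have h₂ : w' ∈ A ∩ B := ⟨hw'A, hw'B⟩
    have hne : w ≠ w' := fun h => hdisj hwp (h ▸ hwq)
    rw [hinter] at h₁ h₂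
    rcases h₁ with rfl | rfl <;> rcases h₂ with rfl | rfl
    exacts [absurd rfl hne, hw, hw.symm, absurd rfl hne]
  have hedge : s(w, w') ∈ p.edges ++ q.edges := by
    rw [← edges_append, take_spec]
    have hwd : w ∈ d.support := support_takeUntil_subset_support _ _ (List.mem_of_mem_tail hwp)
    have hw'd : w' ∈ d.support := support_dropUntil_subset_support _ _ (List.mem_of_mem_tail hwq)
    exact (c.rotate_edges b hb).mem_iff.2 (hcl w w' hadj
      ((mem_support_rotate_iff ..).1 hwd) ((mem_support_rotate_iff ..).1 hw'd))
  rcases List.mem_append.1 hedge with h | h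
  · refine hdisj ?_ hwq
    exact (p.mem_support_iff.1 (p.snd_mem_support_of_mem_edges h)).resolve_left
      (by rintro rfl; exact hbB hw'B)
  · refine hdisj hwp ?_
    exact (q.mem_support_iff.1 (q.fst_mem_support_of_mem_edges h)).resolve_left
      (by rintro rfl; exact haA hwA)

end Walk

lemma IsChordless.induce {s : Set V} {x : V} {c : G.Walk x x} (hcl : G.IsChordless c)
    (hs : ∀ w ∈ c.support, w ∈ s) : (G.induce s).IsChordless (c.induce s hs) :=
  .of_map (Embedding.induce s) (by rwa [Walk.map_induce])

end SimpleGraph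

namespace thetaGraph

variable {r k : ℕ}

def prev (i : Fin r) (j : Fin (k - 1)) : Fin 2 ⊕ Fin r × Fin (k - 1) :=
  if h : j.val = 0 then .inl 0 else .inr (i, ⟨j - 1, by omega⟩)

def next (i : Fin r) (j : Fin (k - 1)) : Fin 2 ⊕ Fin r × Fin (k - 1) :=
  if h : j.val + 2 = k then .inl 1 else .inr (i, ⟨j + 1, by omega⟩)

lemma eq_prev_or_eq_next_of_adj {i : Fin r} {j : Fin (k - 1)} {z : Fin 2 ⊕ Fin r × Fin (k - 1)}
    (h : (thetaGraph r k).Adj (.inr (i, j)) z) : z = prev i j ∨ z = next i j := by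
  rw [thetaGraph, SimpleGraph.fromRel_adj] at h
  unfold prev next
  rcases z with a | ⟨i', j'⟩
  · fin_cases a <;> split_ifs <;> simp_all
  · split_ifs <;> simp_all [Prod.ext_iff, Fin.ext_iff] <;> omega

lemma exists_eq_inr_of_adj_inl_zero (h0 : 0 < k - 1) {z : Fin 2 ⊕ Fin r × Fin (k - 1)}
    (h : (thetaGraph r k).Adj (.inl 0) z) : ∃ i, z = .inr (i, ⟨0, h0⟩) := by
  rw [thetaGraph, SimpleGraph.fromRel_adj] at h
  rcases z with a | ⟨i, j⟩
  · simp at h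
  · simp_all [Fin.ext_iff]

variable {x : Fin 2 ⊕ Fin r × Fin (k - 1)} {c : (thetaGraph r k).Walk x x}

lemma exists_inr_mem_support (hc : c.IsCycle) : ∃ i j, .inr (i, j) ∈ c.support := by
  have hsnd := c.support.mem_of_mem_tail (SimpleGraph.Walk.snd_mem_tail_support hc.not_nil)
  have hadj := c.adj_snd hc.not_nil
  rcases x with a | ⟨i, j⟩
  · rcases hy : c.snd with b | ⟨i, j⟩
    · rw [hy, thetaGraph, SimpleGraph.fromRel_adj] at hadj
      simp at hadj
    · exact ⟨i, j, hy ▸ hsnd⟩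
  · exact ⟨i, j, c.start_mem_support⟩

lemma mem_support_iff_of_val_succ (hc : c.IsCycle) (i : Fin r) {j j' : Fin (k - 1)}
    (h : j.val + 1 = j'.val) : .inr (i, j) ∈ c.support ↔ .inr (i, j') ∈ c.support := by
  have hnbrs := fun {j} (hj : .inr (i, j) ∈ c.support) =>
    hc.mem_edges_of_forall_adj hj fun _ => eq_prev_or_eq_next_of_adj
  constructor
  · intro hj
    have hnext : next i j = .inr (i, j') := by
      rw [next, dif_neg (show j.val + 2 ≠ k by omega)]
      simp only [Sum.inr.injEq, Prod.mk.injEq, true_and, Fin.ext_iff]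
      omega
    simpa [hnext] using c.snd_mem_support_of_mem_edges (hnbrs hj).2
  · intro hj'
    have hprev : prev i j' = .inr (i, j) := by
      rw [prev, dif_neg (show j'.val ≠ 0 by omega)]
      simp only [Sum.inr.injEq, Prod.mk.injEq, true_and, Fin.ext_iff]
      omega
    simpa [hprev] using c.snd_mem_support_of_mem_edges (hnbrs hj').1

lemma mem_support_inr_iff (hc : c.IsCycle) (i : Fin r) (j : Fin (k - 1)) :
    .inr (i, j) ∈ c.support ↔ .inr (i, ⟨0, j.pos⟩) ∈ c.support := by
  obtain ⟨n, hn⟩ := j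
  induction n with
  | zero => rfl
  | succ n ih =>
    exact (mem_support_iff_of_val_succ hc i (j := ⟨n, by omega⟩) rfl).symm.trans (ih _)

lemma exists_support_toFinset_eq (hc : c.IsCycle) :
    ∃ i₁ i₂, i₁ ≠ i₂ ∧ c.support.toFinset = Finset.univ.disjSum ({i₁, i₂} ×ˢ Finset.univ) := by
  obtain ⟨i, j, hij⟩ := exists_inr_mem_support hc
  have h0 : 0 < k - 1 := j.pos
  have hnbrs := fun {i j} (hij : .inr (i, j) ∈ c.support) =>
    hc.mem_edges_of_forall_adj hij fun _ => eq_prev_or_eq_next_of_adj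
  have hfirst_edge : ∀ i, .inr (i, ⟨0, h0⟩) ∈ c.support →
      s(.inl 0, .inr (i, ⟨0, h0⟩)) ∈ c.edges := fun i hi => by
    simpa [prev, Sym2.eq_swap] using (hnbrs hi).1
  have hhub0 : .inl 0 ∈ c.support :=
    c.fst_mem_support_of_mem_edges (hfirst_edge i ((mem_support_inr_iff hc i j).1 hij))
  obtain ⟨t₁, t₂, hne, ht⟩ := hc.exists_mem_edges_iff hhub0
  obtain ⟨i₁, rfl⟩ := exists_eq_inr_of_adj_inl_zero h0 (c.adj_of_mem_edges ((ht t₁).2 (.inl rfl)))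
  obtain ⟨i₂, rfl⟩ := exists_eq_inr_of_adj_inl_zero h0 (c.adj_of_mem_edges ((ht t₂).2 (.inr rfl)))
  have hpaths : ∀ i, .inr (i, ⟨0, h0⟩) ∈ c.support ↔ i = i₁ ∨ i = i₂ := fun i => by
    refine ⟨fun hi => by simpa using (ht _).1 (hfirst_edge i hi), ?_⟩
    rintro (rfl | rfl)
    exacts [c.snd_mem_support_of_mem_edges ((ht _).2 (.inl rfl)),
      c.snd_mem_support_of_mem_edges ((ht _).2 (.inr rfl))]
  have hhub1 : .inl 1 ∈ c.support := by
    have hlast : .inr (i₁, ⟨k - 2, by omega⟩) ∈ c.support :=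
      (mem_support_inr_iff hc _ _).2 ((hpaths i₁).2 (.inl rfl))
    have hnext : next i₁ (⟨k - 2, by omega⟩ : Fin (k - 1)) = .inl 1 := dif_pos (by simp; omega)
    simpa [hnext] using c.snd_mem_support_of_mem_edges (hnbrs hlast).2
  refine ⟨i₁, i₂, fun h => hne (by rw [h]), ?_⟩
  ext (a | ⟨i, j⟩)
  · fin_cases a <;> simpa
  · simp [mem_support_inr_iff hc i j, hpaths]

theorem length_eq_of_isCycle (hc : c.IsCycle) : c.length = 2 * k := by
  obtain ⟨i₁, i₂, hne, hS⟩ := exists_support_toFinset_eq hc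
  have hcard := hc.card_support_toFinset
  rw [hS, Finset.card_disjSum, Finset.card_product, Finset.card_pair hne] at hcard
  have := hc.three_le_length
  simp only [Finset.card_univ, Fintype.card_fin] at hcard
  omega

theorem length_eq_of_iso {W : Type*} {G : SimpleGraph W} (e : G ≃g thetaGraph r k) {w : W}
    {c : G.Walk w w} (hc : c.IsCycle) : c.length = 2 * k := by
  simpa using length_eq_of_isCycle (hc.map (f := e.toHom) e.injective)

end thetaGraph

theorem stmt17_general (k : ℕ) (V : Type) (G : SimpleGraph V)
    (hG : IsThetaSum k V G) (x : V) (c : G.Walk x x) (hc : c.IsCycle)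
    (hcl : G.IsChordless c) :
    c.length = 2 * k := by
  induction hG with
  | base V G r _ e => exact thetaGraph.length_eq_of_iso e hc
  | sum V G A B w₁ w₂ _ hcover hinter hw hsplit _ r _ e ih =>
    rcases hc.support_subset_or_of_isChordless hcover hinter hw hsplit hcl with hA | hB
    · simpa using ih _ (c.induce A hA) (hc.induce hA) (hcl.induce hA)
    · simpa using thetaGraph.length_eq_of_iso e (hc.induce hB)

/-- If `k ≥ 3` and `G` is an iterated 2-clique sum of theta graphs `Θ_r^k`, then every
chordless cycle of `G` has length `2k`. -/
theorem stmt17 (k : ℕ) (hk : 3 ≤ k) (V : Type) (G : SimpleGraph V)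
    (hG : IsThetaSum k V G) (x : V) (c : G.Walk x x) (hc : c.IsCycle)
    (hcl : G.IsChordless c) :
    c.length = 2 * k :=
  stmt17_general k V G hG x c hc hcl
end

section
/- Let w = (z₀, z₁, …, z_{2ℓ} = z₀) be an even closed walk in a graph G and let w′ be another even closed walk such that the binomials B_w = x^λ − x^μ and B_{w′} = x^α − x^μ satisfy gcd(x^λ, x^α) = 1, where x^λ collects the odd-indexed edges of w. Then for every even index i ∈ {0, …, 2ℓ−1}, the edge {z_i, z_{i+1}} of w does not belong to w′. -/
/-- `altSplit l = (λ, μ)` where `λ` is the multiset of elements of `l` in odd positions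
(1st, 3rd, …, i.e. indices 0, 2, …) and `μ` the multiset of elements in even positions. -/
def altSplit {X : Type*} : List X → Multiset X × Multiset X
  | [] => (0, 0)
  | e :: l => ((altSplit l).2 + {e}, (altSplit l).1)

theorem altSplit_fst_add_snd {X : Type*} (l : List X) :
    (altSplit l).1 + (altSplit l).2 = (l : Multiset X) := by
  induction l with
  | nil => rfl
  | cons e l ih =>
    rw [altSplit, ← Multiset.cons_coe, ← ih]
    simp only [← Multiset.singleton_add]
    abel

theorem mem_altSplit_fst_or_snd {X : Type*} {l : List X} {a : X} (h : a ∈ l) :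
    a ∈ (altSplit l).1 ∨ a ∈ (altSplit l).2 := by
  rwa [← Multiset.mem_add, altSplit_fst_add_snd, Multiset.mem_coe]

theorem get_mem_altSplit {X : Type*} :
    ∀ (l : List X) (i : ℕ) (hi : i < l.length),
      (Even i → l.get ⟨i, hi⟩ ∈ (altSplit l).1) ∧ (¬ Even i → l.get ⟨i, hi⟩ ∈ (altSplit l).2)
  | [], _, hi => absurd hi (Nat.not_lt_zero _)
  | e :: l, 0, _ => by simp [altSplit]
  | e :: l, i + 1, hi => by
    obtain ⟨heven, hodd⟩ := get_mem_altSplit l i (Nat.lt_of_succ_lt_succ hi)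
    simp only [Nat.even_add_one, not_not, List.get_cons_succ, altSplit]
    exact ⟨fun h => Multiset.mem_add.2 (Or.inl (hodd h)), heven⟩

theorem stmt18_general {V : Type*} (G : SimpleGraph V) (u u' : V)
    (w : G.Walk u u) (w' : G.Walk u' u')
    (hred : Disjoint (altSplit w.edges).1 (altSplit w.edges).2)
    (hcoprime : Disjoint (altSplit w.edges).1 (altSplit w'.edges).1)
    (hmu : (altSplit w.edges).2 = (altSplit w'.edges).2) :
    ∀ (i : ℕ) (hi : i < w.edges.length), Even i → w.edges.get ⟨i, hi⟩ ∉ w'.edges := by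
  intro i hi hi_even hmem
  have hlam := (get_mem_altSplit w.edges i hi).1 hi_even
  rcases mem_altSplit_fst_or_snd hmem with hα | hμ
  · exact Multiset.disjoint_left.1 hcoprime hlam hα
  · exact Multiset.disjoint_left.1 hred hlam (hmu ▸ hμ)

/-- Let `w` be an even closed walk of length `2ℓ` with `B_w = x^λ − x^μ` (with
`gcd(x^λ, x^μ) = 1`, `x^λ` collecting the odd-position edges of `w`), and let `w′` be an
even closed walk with `B_{w′} = x^α − x^μ` (sharing the trailing term `x^μ`) such that
`gcd(x^λ, x^α) = 1`. Then, for every even index `i`, the edge `{z_i, z_{i+1}}` of `w`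
does not belong to `w′`. -/
theorem stmt18 {V : Type*} (G : SimpleGraph V) (u u' : V) (ℓ : ℕ)
    (w : G.Walk u u) (w' : G.Walk u' u') (hlen : w.length = 2 * ℓ)
    (hred : Disjoint (altSplit w.edges).1 (altSplit w.edges).2)
    (hcoprime : Disjoint (altSplit w.edges).1 (altSplit w'.edges).1)
    (hmu : (altSplit w.edges).2 = (altSplit w'.edges).2) :
    ∀ (i : ℕ) (hi : i < w.edges.length), Even i → w.edges.get ⟨i, hi⟩ ∉ w'.edges :=
  stmt18_general G u u' w w' hred hcoprime hmu
end
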